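/- Let G be a finite simple graph with no isolated vertices that is (H1, H2, C6)-free and satisfies γt(G) = 2γ(G), and let {v1, ..., vk} be a minimum dominating set of G. Then the set of special vertices of G equals T(v1) ∪ ... ∪ T(vk); in particular, every minimum dominating set of G is an S(G)-set. -/

import Mathlib

open SimpleGraph

namespace TotalDom

variable {V : Type*}

/-- The closed neighborhood `N[v]` of a vertex. -/
def cnbr (G : SimpleGraph V) (v : V) : Set V := insert v (G.neighborSet v)

/-- `S` is a dominating set: every vertex outside `S` has a neighbor in `S`. -/
def IsDomSet (G : SimpleGraph V) (S : Set V) : Prop := ∀ v ∉ S, ∃ u ∈ S, G.Adj u v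

/-- `S` is a total dominating set: every vertex has a neighbor in `S`. -/
def IsTotalDomSet (G : SimpleGraph V) (S : Set V) : Prop := ∀ v : V, ∃ u ∈ S, G.Adj u v

/-- The domination number `γ(G)`. -/
noncomputable def domNum (G : SimpleGraph V) : ℕ :=
  sInf {n | ∃ S : Set V, IsDomSet G S ∧ S.ncard = n}

/-- The total domination number `γₜ(G)`. -/
noncomputable def totalDomNum (G : SimpleGraph V) : ℕ :=
  sInf {n | ∃ S : Set V, IsTotalDomSet G S ∧ S.ncard = n}

/-- A minimum dominating set (γ-set). -/
def IsMinDomSet (G : SimpleGraph V) (S : Set V) : Prop := IsDomSet G S ∧ S.ncard = domNum G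

/-- `S` is a packing: closed neighborhoods of distinct members are disjoint. -/
def IsPacking (G : SimpleGraph V) (S : Set V) : Prop :=
  S.Pairwise fun u v => Disjoint (cnbr G u) (cnbr G v)

/-- `M(v)`: neighbors of `v` having a neighbor outside `N[v]`. -/
def Mset (G : SimpleGraph V) (v : V) : Set V :=
  {u | G.Adj v u ∧ ∃ w, G.Adj u w ∧ w ∉ cnbr G v}

/-- `D(v)`: neighbors `u` of `v` that are not true twins of `v` with `N[u] ⊆ N[v]`. -/
def Dset (G : SimpleGraph V) (v : V) : Set V :=
  {u | G.Adj v u ∧ cnbr G u ≠ cnbr G v ∧ cnbr G u ⊆ cnbr G v}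

/-- `T(v)`: `v` together with its true twins. -/
def Tset (G : SimpleGraph V) (v : V) : Set V := {u | cnbr G u = cnbr G v}

/-- A non-isolated vertex `v` is special if no `u ∈ M(v)` satisfies `D(v) ⊆ N(u)`. -/
def Special (G : SimpleGraph V) (v : V) : Prop :=
  (G.neighborSet v).Nonempty ∧ ¬ ∃ u ∈ Mset G v, Dset G v ⊆ G.neighborSet u

/-- An `S(G)`-set: a set of special vertices containing exactly one vertex from each
true-twin equivalence class of special vertices. -/
def IsSGSet (G : SimpleGraph V) (S : Set V) : Prop :=
  (∀ u ∈ S, Special G u) ∧ ∀ v, Special G v → ∃! u, u ∈ S ∧ u ∈ Tset G v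

/-- `G` has no isolated vertices. -/
def NoIsolated (G : SimpleGraph V) : Prop := ∀ v : V, ∃ u, G.Adj v u

/-- `G` contains no induced copy of `H`. -/
def Free {α : Type*} (H : SimpleGraph α) (G : SimpleGraph V) : Prop := IsEmpty (H ↪g G)

/-- `H₁`: a 6-cycle plus one chord between vertices at distance two along the cycle. -/
def H1 : SimpleGraph (Fin 6) := cycleGraph 6 ⊔ fromEdgeSet {s(0, 2)}

/-- `H₂`: a 6-cycle `x₁x₂x₃x₄x₅x₆` plus the chords `x₂x₆` and `x₃x₅`. -/
def H2 : SimpleGraph (Fin 6) := cycleGraph 6 ⊔ fromEdgeSet {s(1, 5), s(2, 4)}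

/-- A leaf: a vertex of degree one. -/
def IsLeaf (G : SimpleGraph V) (v : V) : Prop := ∃! u, G.Adj v u

/-- A support vertex: a vertex adjacent to a leaf. -/
def IsSupport (G : SimpleGraph V) (v : V) : Prop := ∃ u, G.Adj v u ∧ IsLeaf G u

/-- `sup(G)`: the set of support vertices. -/
def supSet (G : SimpleGraph V) : Set V := {v | IsSupport G v}

/-!
Adding one neighbour of every vertex of a γ-set `D` gives a total dominating set, so the equality
`γₜ = 2γ` says that no total dominating set of size `2|D| - 1` exists. Overlapping closed
neighbourhoods inside `D` would give one (so `D` is a packing), and so would a non-special `v ∈ D`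
with witness `u ∈ M(v)`: take `u`, the rest of `D`, and for each `d ∈ D - v` a neighbour `g d`
adjacent to every vertex of `M(v)` that reaches `N(d)` outside `N[v]`. Such a common neighbour
exists because two vertices of `M(v)` with distinct private neighbours in `N(d)` would close a
6-cycle through `v` and `d` whose only possible chords are the two short ones, i.e. an induced
`C₆`, `H₁` or `H₂`. Conversely, if a special `v ∉ D` is not a true twin of its dominator `d ∈ D`,
then either `d` witnesses that `v` is not special, or `N[d] ⊊ N[v]` and swapping `d` for `v`
gives a γ-set that is not a packing.
-/

section Neighborhoods

variable {G : SimpleGraph V} {D : Set V} {a b d u v x z : V}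

lemma mem_cnbr : z ∈ cnbr G v ↔ z = v ∨ G.Adj v z := Set.mem_insert_iff

lemma self_mem_cnbr (G : SimpleGraph V) (v : V) : v ∈ cnbr G v := Set.mem_insert _ _

lemma mem_cnbr_of_adj (h : G.Adj v z) : z ∈ cnbr G v := Set.mem_insert_of_mem _ h

lemma mem_cnbr_comm : z ∈ cnbr G v ↔ v ∈ cnbr G z := by
  simp only [mem_cnbr, eq_comm, G.adj_comm]

lemma adj_of_mem_cnbr_of_ne (h : z ∈ cnbr G v) (hne : z ≠ v) : G.Adj v z :=
  (mem_cnbr.1 h).resolve_left hne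

lemma adj_or_adj_of_mem_cnbr (hzx : z ∈ cnbr G x) (hza : z ∈ cnbr G a) (hxa : x ≠ a) :
    G.Adj z x ∨ G.Adj a x := by
  rcases mem_cnbr.1 hzx with rfl | hxz
  · exact Or.inr (adj_of_mem_cnbr_of_ne hza hxa)
  · exact Or.inl hxz.symm

lemma IsDomSet.exists_mem_cnbr (hD : IsDomSet G D) (z : V) : ∃ d ∈ D, z ∈ cnbr G d := by
  by_cases hz : z ∈ D
  · exact ⟨z, hz, self_mem_cnbr G z⟩
  · obtain ⟨d, hd, hdz⟩ := hD z hz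
    exact ⟨d, hd, mem_cnbr_of_adj hdz⟩

lemma IsPacking.eq_of_mem_cnbr (hP : IsPacking G D) (ha : a ∈ D) (hb : b ∈ D)
    (hxa : x ∈ cnbr G a) (hxb : x ∈ cnbr G b) : a = b := by
  by_contra hab
  exact Set.disjoint_left.1 (hP ha hb hab) hxa hxb

lemma mem_Mset_of_not_subset (hvd : G.Adj v d) (hsub : ¬ cnbr G d ⊆ cnbr G v) :
    d ∈ Mset G v := by
  obtain ⟨w, hwd, hwv⟩ := Set.not_subset.1 hsub
  refine ⟨hvd, w, adj_of_mem_cnbr_of_ne hwd ?_, hwv⟩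
  rintro rfl
  exact hwv (mem_cnbr_of_adj hvd)

lemma adj_iff_adj_of_cnbr_eq (hab : cnbr G a = cnbr G b) (hu : cnbr G u ≠ cnbr G a) :
    G.Adj a u ↔ G.Adj b u := by
  have hua : u ≠ a := by rintro rfl; exact hu rfl
  have hub : u ≠ b := by rintro rfl; exact hu hab.symm
  exact ⟨fun h => adj_of_mem_cnbr_of_ne (hab ▸ mem_cnbr_of_adj h) hub,
    fun h => adj_of_mem_cnbr_of_ne (hab.symm ▸ mem_cnbr_of_adj h) hua⟩

end Neighborhoods

section TrueTwins

variable {G : SimpleGraph V} {a b : V}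

lemma Mset_eq_of_cnbr_eq (hab : cnbr G a = cnbr G b) : Mset G a = Mset G b := by
  ext u
  simp only [Mset, ← hab]
  refine and_congr_left fun ⟨w, huw, hwa⟩ => adj_iff_adj_of_cnbr_eq hab fun hua => ?_
  exact hwa (hua ▸ mem_cnbr_of_adj huw)

lemma Dset_eq_of_cnbr_eq (hab : cnbr G a = cnbr G b) : Dset G a = Dset G b := by
  ext u
  simp only [Dset, ← hab]
  exact and_congr_left fun hu => adj_iff_adj_of_cnbr_eq hab hu.1

lemma Special.of_cnbr_eq (hs : Special G a) (hab : cnbr G a = cnbr G b) : Special G b := by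
  refine ⟨?_, Mset_eq_of_cnbr_eq hab ▸ Dset_eq_of_cnbr_eq hab ▸ hs.2⟩
  by_cases hab' : a = b
  · exact hab' ▸ hs.1
  · exact ⟨a, adj_of_mem_cnbr_of_ne (hab ▸ self_mem_cnbr G a) hab'⟩

end TrueTwins

section Domination

variable {G : SimpleGraph V} {D T : Set V} {d v : V}

lemma domNum_le_ncard (hT : IsDomSet G T) : domNum G ≤ T.ncard := Nat.sInf_le ⟨T, hT, rfl⟩

lemma totalDomNum_le_ncard (hT : IsTotalDomSet G T) : totalDomNum G ≤ T.ncard :=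
  Nat.sInf_le ⟨T, hT, rfl⟩

lemma IsMinDomSet.two_mul_ncard_le (h : totalDomNum G = 2 * domNum G) (hD : IsMinDomSet G D)
    (hT : IsTotalDomSet G T) : 2 * D.ncard ≤ T.ncard := by
  rw [hD.2, ← h]
  exact totalDomNum_le_ncard hT

lemma IsPacking.Dset_subset_neighborSet (hP : IsPacking G D) (hdom : IsDomSet G D) (hd : d ∈ D)
    (hdv : G.Adj d v) (hsub : ¬ cnbr G d ⊆ cnbr G v) :
    Dset G v ⊆ G.neighborSet d := by
  rintro x ⟨-, -, hxv⟩
  obtain ⟨e, he, hxe⟩ := hdom.exists_mem_cnbr x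
  have hve : v ∈ cnbr G e := mem_cnbr_comm.1 (hxv (mem_cnbr_comm.1 hxe))
  obtain rfl := hP.eq_of_mem_cnbr he hd hve (mem_cnbr_of_adj hdv)
  refine adj_of_mem_cnbr_of_ne hxe ?_
  rintro rfl
  exact hsub hxv

variable [Finite V]

lemma IsMinDomSet.isPacking (hiso : NoIsolated G) (h : totalDomNum G = 2 * domNum G)
    (hD : IsMinDomSet G D) : IsPacking G D := by
  intro a ha b hb hab
  refine Set.disjoint_left.2 fun z hza hzb => ?_
  choose f hf using hiso
  set T := insert z D ∪ f '' (D \ {a, b})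
  have hT : IsTotalDomSet G T := by
    intro x
    by_cases hx : x ∈ D
    · by_cases hxab : x = a ∨ x = b
      · obtain ⟨c, hc, hxc, hzx, hzc⟩ : ∃ c ∈ D, x ≠ c ∧ z ∈ cnbr G x ∧ z ∈ cnbr G c := by
          rcases hxab with rfl | rfl
          exacts [⟨b, hb, hab, hza, hzb⟩, ⟨a, ha, Ne.symm hab, hzb, hza⟩]
        rcases adj_or_adj_of_mem_cnbr hzx hzc hxc with hz_adj | hc_adj
        · exact ⟨z, Or.inl (Set.mem_insert _ _), hz_adj⟩
        · exact ⟨c, Or.inl (Set.mem_insert_of_mem _ hc), hc_adj⟩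
      · refine ⟨f x, Or.inr ⟨x, ⟨hx, ?_⟩, rfl⟩, (hf x).symm⟩
        simpa only [Set.mem_insert_iff, Set.mem_singleton_iff] using hxab
    · obtain ⟨d, hd, hdx⟩ := hD.1 x hx
      exact ⟨d, Or.inl (Set.mem_insert_of_mem _ hd), hdx⟩
  have habD : {a, b} ⊆ D := Set.insert_subset ha (Set.singleton_subset_iff.2 hb)
  have h2 : 2 ≤ D.ncard := Set.ncard_pair hab ▸ Set.ncard_le_ncard habD
  have hcard : T.ncard ≤ D.ncard + 1 + (D.ncard - 2) :=
    calc T.ncard ≤ (insert z D).ncard + (f '' (D \ {a, b})).ncard := Set.ncard_union_le _ _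
      _ ≤ D.ncard + 1 + (D \ {a, b}).ncard :=
        add_le_add (Set.ncard_insert_le _ _) Set.ncard_image_le
      _ = D.ncard + 1 + (D.ncard - 2) := by rw [Set.ncard_sdiff habD, Set.ncard_pair hab]
  have := hD.two_mul_ncard_le h hT
  omega

lemma IsMinDomSet.insert_diff_singleton (hD : IsMinDomSet G D) (hd : d ∈ D) (hdv : G.Adj d v)
    (hsub : cnbr G d ⊆ cnbr G v) : IsMinDomSet G (insert v (D \ {d})) := by
  have hdom : IsDomSet G (insert v (D \ {d})) := by
    intro x hx
    have hxv : x ≠ v := fun hxv => hx (hxv ▸ Set.mem_insert _ _)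
    by_cases hxD : x ∈ D
    · obtain rfl : x = d := by_contra fun hxd => hx (Set.mem_insert_of_mem _ ⟨hxD, hxd⟩)
      exact ⟨v, Set.mem_insert _ _, hdv.symm⟩
    obtain ⟨e, he, hex⟩ := hD.1 x hxD
    by_cases hed : e = d
    · exact ⟨v, Set.mem_insert _ _, adj_of_mem_cnbr_of_ne (hsub (hed ▸ mem_cnbr_of_adj hex)) hxv⟩
    · exact ⟨e, Set.mem_insert_of_mem _ ⟨he, hed⟩, hex⟩
  refine ⟨hdom, le_antisymm ?_ (domNum_le_ncard hdom)⟩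
  calc (insert v (D \ {d})).ncard ≤ (D \ {d}).ncard + 1 := Set.ncard_insert_le _ _
    _ = D.ncard := Set.ncard_sdiff_singleton_add_one hd
    _ = domNum G := hD.2

lemma IsMinDomSet.cnbr_eq_of_cnbr_subset (hiso : NoIsolated G) (h : totalDomNum G = 2 * domNum G)
    (hD : IsMinDomSet G D) (hd : d ∈ D) (hv : v ∉ D) (hdv : G.Adj d v)
    (hsub : cnbr G d ⊆ cnbr G v) : cnbr G d = cnbr G v := by
  by_contra hne
  obtain ⟨z, hzv, hzd⟩ := Set.exists_of_ssubset (hsub.ssubset_of_ne hne)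
  obtain ⟨e, he, hze⟩ := hD.1.exists_mem_cnbr z
  have hed : e ≠ d := by rintro rfl; exact hzd hze
  have hP := (hD.insert_diff_singleton hd hdv hsub).isPacking hiso h
  obtain rfl := hP.eq_of_mem_cnbr (Set.mem_insert _ _) (Set.mem_insert_of_mem _ ⟨he, hed⟩) hzv hze
  exact hv he

lemma IsMinDomSet.exists_cnbr_eq_of_special (hiso : NoIsolated G)
    (h : totalDomNum G = 2 * domNum G) (hD : IsMinDomSet G D) (hs : Special G v) :
    ∃ d ∈ D, cnbr G v = cnbr G d := by
  by_cases hv : v ∈ D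
  · exact ⟨v, hv, rfl⟩
  obtain ⟨d, hd, hdv⟩ := hD.1 v hv
  by_cases hsub : cnbr G d ⊆ cnbr G v
  · exact ⟨d, hd, (hD.cnbr_eq_of_cnbr_subset hiso h hd hv hdv hsub).symm⟩
  · exact (hs.2 ⟨d, mem_Mset_of_not_subset hdv.symm hsub,
      (hD.isPacking hiso h).Dset_subset_neighborSet hD.1 hd hdv hsub⟩).elim

end Domination

section ForbiddenSubgraphs

variable {G : SimpleGraph V}

lemma Free.elim_of_adj_iff {n : ℕ} {H : SimpleGraph (Fin n)} (hH : Free H G)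
    (hH_twin : ∀ i j, ¬ H.Adj i j → (∀ k, H.Adj i k ↔ H.Adj j k) → i = j)
    (q : Fin n → V) (hq : ∀ i j, i < j → (G.Adj (q i) (q j) ↔ H.Adj i j)) : False := by
  have hq' : ∀ i j, G.Adj (q i) (q j) ↔ H.Adj i j := by
    intro i j
    rcases lt_trichotomy i j with hij | rfl | hij
    · exact hq i j hij
    · simp
    · rw [G.adj_comm, H.adj_comm]
      exact hq j i hij
  -- `q` is injective since distinct non-adjacent vertices of `H` have different neighbourhoods
  refine hH.elim ⟨⟨q, fun i j hij => hH_twin i j ?_ fun k => ?_⟩, hq' _ _⟩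
  · rw [← hq', hij]
    exact G.irrefl
  · rw [← hq', ← hq', hij]

lemma H1_eq_of_forall_adj_iff : ∀ i j, ¬ H1.Adj i j → (∀ k, H1.Adj i k ↔ H1.Adj j k) → i = j := by
  simp only [H1, sup_adj, fromEdgeSet_adj, Set.mem_singleton_iff, cycleGraph_adj]
  decide

lemma H2_eq_of_forall_adj_iff : ∀ i j, ¬ H2.Adj i j → (∀ k, H2.Adj i k ↔ H2.Adj j k) → i = j := by
  simp only [H2, sup_adj, fromEdgeSet_adj, Set.mem_insert_iff, Set.mem_singleton_iff,
    cycleGraph_adj]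
  decide

lemma Free.not_sixCycle (hH1 : Free H1 G) (hH2 : Free H2 G) (hC6 : Free (cycleGraph 6) G)
    {p0 p1 p2 p3 p4 p5 : V}
    (e01 : G.Adj p0 p1) (e12 : G.Adj p1 p2) (e23 : G.Adj p2 p3)
    (e34 : G.Adj p3 p4) (e45 : G.Adj p4 p5) (e05 : G.Adj p0 p5)
    (n02 : ¬ G.Adj p0 p2) (n03 : ¬ G.Adj p0 p3) (n04 : ¬ G.Adj p0 p4)
    (n13 : ¬ G.Adj p1 p3) (n14 : ¬ G.Adj p1 p4)
    (n25 : ¬ G.Adj p2 p5) (n35 : ¬ G.Adj p3 p5) : False := by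
  by_cases c15 : G.Adj p1 p5 <;> by_cases c24 : G.Adj p2 p4
  · refine hH2.elim_of_adj_iff H2_eq_of_forall_adj_iff ![p0, p1, p2, p3, p4, p5] fun i j hij => ?_
    clear hH1 hH2 hC6
    fin_cases i <;> fin_cases j <;> simp_all [H2, cycleGraph_adj] <;> decide
  · refine hH1.elim_of_adj_iff H1_eq_of_forall_adj_iff ![p1, p0, p5, p4, p3, p2] fun i j hij => ?_
    clear hH1 hH2 hC6
    fin_cases i <;> fin_cases j <;> simp_all [H1, cycleGraph_adj, G.adj_comm] <;> decide
  · refine hH1.elim_of_adj_iff H1_eq_of_forall_adj_iff ![p2, p3, p4, p5, p0, p1] fun i j hij => ?_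
    clear hH1 hH2 hC6
    fin_cases i <;> fin_cases j <;> simp_all [H1, cycleGraph_adj, G.adj_comm] <;> decide
  · refine hC6.elim_of_adj_iff (by decide) ![p0, p1, p2, p3, p4, p5] fun i j hij => ?_
    clear hH1 hH2 hC6
    fin_cases i <;> fin_cases j <;> simp_all [cycleGraph_adj] <;> decide

lemma adj_or_adj_of_free {v d a b y₁ y₂ : V} (hH1 : Free H1 G) (hH2 : Free H2 G)
    (hC6 : Free (cycleGraph 6) G) (hva : G.Adj v a) (hvb : G.Adj v b)
    (hy₁ : y₁ ∉ cnbr G v) (hy₂ : y₂ ∉ cnbr G v) (hd : d ∉ cnbr G v)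
    (hay₁ : G.Adj a y₁) (hby₂ : G.Adj b y₂) (hdy₁ : G.Adj d y₁) (hdy₂ : G.Adj d y₂)
    (had : ¬ G.Adj a d) (hbd : ¬ G.Adj b d) :
    G.Adj a y₂ ∨ G.Adj b y₁ := by
  by_contra! hc
  exact hH1.not_sixCycle hH2 hC6 hva hay₁ hdy₁.symm hdy₂ hby₂.symm hvb
    (fun h => hy₁ (mem_cnbr_of_adj h)) (fun h => hd (mem_cnbr_of_adj h))
    (fun h => hy₂ (mem_cnbr_of_adj h)) had hc.1 (fun h => hc.2 h.symm) (fun h => hbd h.symm)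

lemma exists_adj_forall_of_free [Finite V] {v d : V} {A : Set V} (hH1 : Free H1 G)
    (hH2 : Free H2 G) (hC6 : Free (cycleGraph 6) G) (hA : ∀ a ∈ A, G.Adj v a)
    (hd : d ∉ cnbr G v) (hAd : ∀ a ∈ A, ¬ G.Adj a d) (hd_adj : ∃ y, G.Adj d y) :
    ∃ y, G.Adj d y ∧
      ∀ a ∈ A, (∃ y', G.Adj a y' ∧ y' ∉ cnbr G v ∧ G.Adj d y') → G.Adj a y := by
  set W := {y | G.Adj d y ∧ y ∉ cnbr G v}
  rcases W.eq_empty_or_nonempty with hW | hW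
  · obtain ⟨y, hdy⟩ := hd_adj
    refine ⟨y, hdy, fun a _ ⟨y', _, hy'v, hdy'⟩ => ?_⟩
    exact (hW.subset ⟨hdy', hy'v⟩ : y' ∈ (∅ : Set V)).elim
  -- a `y₀ ∈ W` adjacent to the most vertices of `A` is adjacent to all that reach `W`
  obtain ⟨y₀, ⟨hdy₀, hy₀v⟩, hy₀max⟩ :=
    W.toFinite.exists_maximalFor (fun y => {a ∈ A | G.Adj a y}.ncard) W hW
  refine ⟨y₀, hdy₀, fun b hb ⟨y₂, hby₂, hy₂v, hdy₂⟩ => by_contra fun hby₀ => ?_⟩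
  have hssub : {a ∈ A | G.Adj a y₀} ⊂ {a ∈ A | G.Adj a y₂} := by
    refine Set.ssubset_iff_subset_ne.2 ⟨fun a ⟨ha, hay₀⟩ => ⟨ha, ?_⟩, fun heq => ?_⟩
    · exact (adj_or_adj_of_free hH1 hH2 hC6 (hA a ha) (hA b hb) hy₀v hy₂v hd hay₀ hby₂ hdy₀
        hdy₂ (hAd a ha) (hAd b hb)).resolve_right hby₀
    · exact hby₀ (heq.symm.subset ⟨hb, hby₂⟩).2
  have hlt := Set.ncard_lt_ncard hssub
  exact hlt.not_ge (hy₀max ⟨hdy₂, hy₂v⟩ hlt.le)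

end ForbiddenSubgraphs

section Special

variable {G : SimpleGraph V} {D : Set V} {a d u v z : V}

lemma adj_or_mem_Mset_of_mem_cnbr (hu : u ∈ Mset G v) (hDu : Dset G v ⊆ G.neighborSet u)
    (hz : z ∈ cnbr G v) : G.Adj u z ∨ z ∈ Mset G v := by
  rcases mem_cnbr.1 hz with rfl | hvz
  · exact Or.inl hu.1.symm
  by_cases hzM : z ∈ Mset G v
  · exact Or.inr hzM
  left
  have hzu : z ≠ u := by rintro rfl; exact hzM hu
  have hsub : cnbr G z ⊆ cnbr G v := by
    intro t ht
    rcases mem_cnbr.1 ht with rfl | hzt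
    · exact hz
    · by_contra htv
      exact hzM ⟨hvz, t, hzt, htv⟩
  by_cases heq : cnbr G z = cnbr G v
  · exact (adj_of_mem_cnbr_of_ne (heq ▸ mem_cnbr_of_adj hu.1) hzu.symm).symm
  · exact hDu ⟨hvz, heq, hsub⟩

lemma IsPacking.not_mem_cnbr (hP : IsPacking G D) (hv : v ∈ D) (hd : d ∈ D) (hdv : d ≠ v) :
    d ∉ cnbr G v :=
  fun h => hdv (hP.eq_of_mem_cnbr hd hv (self_mem_cnbr G d) h)

lemma IsPacking.not_adj_of_adj (hP : IsPacking G D) (hv : v ∈ D) (hd : d ∈ D) (hdv : d ≠ v)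
    (hva : G.Adj v a) : ¬ G.Adj a d :=
  fun h => hdv (hP.eq_of_mem_cnbr hd hv (mem_cnbr_of_adj h.symm) (mem_cnbr_of_adj hva))

lemma IsPacking.exists_adj_of_mem_Mset (hP : IsPacking G D) (hdom : IsDomSet G D) (hv : v ∈ D)
    (ha : a ∈ Mset G v) : ∃ e ∈ D, e ≠ v ∧ ∃ y, G.Adj a y ∧ y ∉ cnbr G v ∧ G.Adj e y := by
  obtain ⟨hva, y, hay, hyv⟩ := ha
  obtain ⟨e, he, hye⟩ := hdom.exists_mem_cnbr y
  have hev : e ≠ v := by rintro rfl; exact hyv hye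
  refine ⟨e, he, hev, y, hay, hyv, adj_of_mem_cnbr_of_ne hye ?_⟩
  rintro rfl
  exact hP.not_adj_of_adj hv he hev hva hay

lemma IsMinDomSet.special_of_mem [Finite V] (hiso : NoIsolated G) (hH1 : Free H1 G)
    (hH2 : Free H2 G) (hC6 : Free (cycleGraph 6) G) (h : totalDomNum G = 2 * domNum G)
    (hD : IsMinDomSet G D) (hv : v ∈ D) : Special G v := by
  have hP := hD.isPacking hiso h
  refine ⟨hiso v, fun ⟨u, hu, hDu⟩ => ?_⟩
  have hg : ∀ d ∈ D \ {v}, ∃ y, G.Adj d y ∧ ∀ a ∈ Mset G v,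
      (∃ y', G.Adj a y' ∧ y' ∉ cnbr G v ∧ G.Adj d y') → G.Adj a y :=
    fun d ⟨hd, hdv⟩ => exists_adj_forall_of_free hH1 hH2 hC6 (fun a ha => ha.1)
      (hP.not_mem_cnbr hv hd hdv) (fun a ha => hP.not_adj_of_adj hv hd hdv ha.1) (hiso d)
  choose! g hgd hgM using hg
  set T := insert u ((D \ {v}) ∪ g '' (D \ {v}))
  have hT : IsTotalDomSet G T := by
    intro z
    obtain ⟨d, hd, hzd⟩ := hD.1.exists_mem_cnbr z
    by_cases hdv : d = v
    · subst hdv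
      rcases adj_or_mem_Mset_of_mem_cnbr hu hDu hzd with huz | hzM
      · exact ⟨u, Set.mem_insert _ _, huz⟩
      obtain ⟨e, he, hed, hy⟩ := hP.exists_adj_of_mem_Mset hD.1 hd hzM
      exact ⟨g e, Set.mem_insert_of_mem _ (Or.inr ⟨e, ⟨he, hed⟩, rfl⟩),
        (hgM e ⟨he, hed⟩ z hzM hy).symm⟩
    rcases mem_cnbr.1 hzd with rfl | hdz
    · exact ⟨g z, Set.mem_insert_of_mem _ (Or.inr ⟨z, ⟨hd, hdv⟩, rfl⟩), (hgd z ⟨hd, hdv⟩).symm⟩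
    · exact ⟨d, Set.mem_insert_of_mem _ (Or.inl ⟨hd, hdv⟩), hdz⟩
  have hcard : T.ncard + 1 ≤ 2 * D.ncard :=
    calc T.ncard + 1 ≤ (D \ {v} ∪ g '' (D \ {v})).ncard + 2 :=
          Nat.add_le_add_right (Set.ncard_insert_le _ _) 1
      _ ≤ (D \ {v}).ncard + (D \ {v}).ncard + 2 :=
          Nat.add_le_add_right ((Set.ncard_union_le _ _).trans
            (Nat.add_le_add_left Set.ncard_image_le _)) 2
      _ = 2 * D.ncard := by rw [← Set.ncard_sdiff_singleton_add_one hv]; ring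
  have := hD.two_mul_ncard_le h hT
  omega

end Special

/-- In an `(H₁,H₂,C₆)`-free graph `G` with no isolated vertices satisfying `γₜ(G) = 2γ(G)`,
for any minimum dominating set `D` the set of special vertices equals `⋃ v ∈ D, T(v)`;
in particular `D` is an `S(G)`-set. -/
theorem stmt7 {V : Type*} [Fintype V] (G : SimpleGraph V) (hiso : NoIsolated G)
    (hH1 : Free H1 G) (hH2 : Free H2 G) (hC6 : Free (cycleGraph 6) G)
    (h : totalDomNum G = 2 * domNum G)
    (D : Set V) (hD : IsMinDomSet G D) :
    ({v | Special G v} = ⋃ x ∈ D, Tset G x) ∧ IsSGSet G D := by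
  have hspecial : ∀ d ∈ D, Special G d := fun d hd =>
    hD.special_of_mem hiso hH1 hH2 hC6 h hd
  have htwin : ∀ v, Special G v → ∃ d ∈ D, cnbr G v = cnbr G d := fun v hv =>
    hD.exists_cnbr_eq_of_special hiso h hv
  refine ⟨?_, hspecial, fun v hv => ?_⟩
  · ext v
    simp only [Set.mem_iUnion, exists_prop, Tset]
    exact ⟨htwin v, fun ⟨d, hd, hvd⟩ => (hspecial d hd).of_cnbr_eq hvd.symm⟩
  · obtain ⟨d, hd, hvd⟩ := htwin v hv
    refine ⟨d, ⟨hd, hvd.symm⟩, fun e ⟨he, hev⟩ => ?_⟩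
    exact (hD.isPacking hiso h).eq_of_mem_cnbr he hd (self_mem_cnbr G e)
      ((hev.trans hvd) ▸ self_mem_cnbr G e)

end TotalDom
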